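/- (Conjunction/AND case of the SNOOP translation theorem) Let E_1, E_2 be SNOOP expressions each satisfying the translation property. If [t_i, t_f] ∈ (E_1 △ E_2)[H], i.e., there exist t_{f'}, t_{i'} with t_i ≤ t_{f'} ≤ t_{i'} ≤ t_f such that either ([t_i, t_{f'}] ∈ E_1[H] and [t_{i'}, t_f] ∈ E_2[H]) or ([t_i, t_{f'}] ∈ E_2[H] and [t_{i'}, t_f] ∈ E_1[H]), then for every interpretation M compatible with H, M, ⟨s_{t_i}, …, s_{t_f+1}⟩ ⊨_TR [(τ(E_1) ⊗ path) ∧ (path ⊗ τ(E_2))] ∨ [(τ(E_2) ⊗ path) ∧ (path ⊗ τ(E_1))]. -/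
import Mathlib


/- Transaction Logic (TR) core: paths, interpretations, formulas, satisfaction. -/

namespace TRSnoop

/-- A path `⟨D₀ →^{O₁} D₁ →^{O₂} … →^{Oₖ} Dₖ⟩`: an initial state followed by
labeled transitions. -/
structure Path (St L : Type) where
  first : St
  steps : List (L × St)

def Path.last {St L : Type} (π : Path St L) : St :=
  (π.steps.map Prod.snd).getLastD π.first

/-- `π = π₁ ∘ π₂`: a split of `π` into two subpaths, where `π₁` ends at the
state where `π₂` begins. -/
def Path.Split {St L : Type} (π π₁ π₂ : Path St L) : Prop :=
  π₁.first = π.first ∧ π₁.last = π₂.first ∧ π₁.steps ++ π₂.steps = π.steps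

/-- An interpretation maps every path to a set of atoms, or to `⊤`
(represented by `none`). -/
abbrev Interp (St L A : Type) := Path St L → Option (Set A)

def Interp.isTop {St L A : Type} (M : Interp St L A) (π : Path St L) : Prop :=
  M π = none

/-- `a ∈ M(π)` (trivially true when `M(π) = ⊤`). -/
def Interp.mem {St L A : Type} (M : Interp St L A) (π : Path St L) (a : A) : Prop :=
  ∀ s, M π = some s → a ∈ s

/-- TR formulas: atoms, negation, disjunction, conjunction and serial
conjunction `⊗`. -/
inductive Fml (A : Type) where
  | atom : A → Fml A
  | neg  : Fml A → Fml A
  | orF  : Fml A → Fml A → Fml A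
  | andF : Fml A → Fml A → Fml A
  | seq  : Fml A → Fml A → Fml A

/-- TR satisfaction `M, π ⊨_TR φ` (everything is satisfied when `M(π) = ⊤`). -/
def trSat {St L A : Type} (M : Interp St L A) : Fml A → Path St L → Prop
  | Fml.atom a, π => Interp.isTop M π ∨ Interp.mem M π a
  | Fml.neg φ, π => Interp.isTop M π ∨ ¬ trSat M φ π
  | Fml.orF φ ψ, π => Interp.isTop M π ∨ trSat M φ π ∨ trSat M ψ π
  | Fml.andF φ ψ, π => Interp.isTop M π ∨ (trSat M φ π ∧ trSat M ψ π)
  | Fml.seq φ ψ, π => Interp.isTop M π ∨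
      ∃ π₁ π₂, Path.Split π π₁ π₂ ∧ trSat M φ π₁ ∧ trSat M ψ π₂

/-- The tautology `path ≡ (φ ∨ ¬φ)`, true on paths of arbitrary size. -/
def pathF {A : Type} [Inhabited A] : Fml A :=
  Fml.orF (Fml.atom default) (Fml.neg (Fml.atom default))

/-- Occurrence atoms `occ(e)` for a type `E` of primitive event names. -/
inductive TAtom (E : Type) where
  | occ : E → TAtom E

instance {E : Type} [Inhabited E] : Inhabited (TAtom E) := ⟨TAtom.occ default⟩

/-- SNOOP event expressions without the periodic and aperiodic operators:
primitive events, sequence `;`, disjunction `▽`, conjunction `△` and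
`notE E₃ E₁ E₂ = ¬(E₃)[E₁,E₂]`. -/
inductive Snoop (E : Type) where
  | prim : E → Snoop E
  | seqE : Snoop E → Snoop E → Snoop E
  | orE  : Snoop E → Snoop E → Snoop E
  | andE : Snoop E → Snoop E → Snoop E
  | notE : Snoop E → Snoop E → Snoop E → Snoop E

/-- A history: which primitive events occur at which (discrete) time points. -/
abbrev History (E : Type) := E → ℕ → Prop

/-- `occursOn H Ex ti tf` formalizes `[tᵢ,t_f] ∈ Ex[H]`: the expression `Ex`
occurs over `H` on the interval `[tᵢ,t_f]`, in the unrestricted context. -/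
def occursOn {E : Type} (H : History E) : Snoop E → ℕ → ℕ → Prop
  | Snoop.prim e, ti, tf => ti = tf ∧ H e ti
  | Snoop.seqE E1 E2, ti, tf =>
      ∃ tf1 ti2, ti ≤ tf1 ∧ tf1 < ti2 ∧ ti2 ≤ tf ∧
        occursOn H E1 ti tf1 ∧ occursOn H E2 ti2 tf
  | Snoop.orE E1 E2, ti, tf => occursOn H E1 ti tf ∨ occursOn H E2 ti tf
  | Snoop.andE E1 E2, ti, tf =>
      ∃ tf' ti', ti ≤ tf' ∧ tf' ≤ ti' ∧ ti' ≤ tf ∧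
        ((occursOn H E1 ti tf' ∧ occursOn H E2 ti' tf) ∨
         (occursOn H E2 ti tf' ∧ occursOn H E1 ti' tf))
  | Snoop.notE E3 E1 E2, ti, tf =>
      ∃ tf1 ti2, ti ≤ tf1 ∧ tf1 < ti2 ∧ ti2 ≤ tf ∧
        occursOn H E1 ti tf1 ∧ occursOn H E2 ti2 tf ∧
        ¬ ∃ ti3 tf3, ti ≤ ti3 ∧ ti3 ≤ tf3 ∧ tf3 ≤ tf ∧ occursOn H E3 ti3 tf3

/-- The translation `τ` of SNOOP expressions into TR formulas. -/
def tau {E : Type} [Inhabited E] : Snoop E → Fml (TAtom E)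
  | Snoop.prim e => Fml.atom (TAtom.occ e)
  | Snoop.seqE E1 E2 => Fml.seq (tau E1) (Fml.seq pathF (tau E2))
  | Snoop.orE E1 E2 => Fml.orF (tau E1) (tau E2)
  | Snoop.andE E1 E2 =>
      Fml.orF (Fml.andF (Fml.seq (tau E1) pathF) (Fml.seq pathF (tau E2)))
              (Fml.andF (Fml.seq (tau E2) pathF) (Fml.seq pathF (tau E1)))
  | Snoop.notE E3 E1 E2 => Fml.seq (tau E1) (Fml.seq (Fml.neg (tau E3)) (tau E2))

/-- The path `⟨s_{tᵢ}, s_{tᵢ+1}, …, s_{t_f+1}⟩`: states are identified with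
natural numbers, time point `t` taking place in the transition of states
`⟨s_t, s_{t+1}⟩`; transition labels are irrelevant (`Unit`). -/
def seg (ti tf : ℕ) : Path ℕ Unit :=
  ⟨ti, (List.range (tf + 1 - ti)).map (fun k => ((), ti + k + 1))⟩

/-- `M` is compatible with `H`: for each primitive occurrence `e[t] ∈ H`,
`M, ⟨s_t, s_{t+1}⟩ ⊨_TR occ(e)`. -/
def Compatible {E : Type} (H : History E) (M : Interp ℕ Unit (TAtom E)) : Prop :=
  ∀ e t, H e t → trSat M (Fml.atom (TAtom.occ e)) (seg t t)

end TRSnoop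

open TRSnoop

/-- `Ex` satisfies the translation property: whenever `Ex` occurs over `H` on an
interval, every interpretation compatible with `H` satisfies `τ(Ex)` on the
corresponding subpath. -/
def TransProp {E : Type} [Inhabited E] (H : History E) (Ex : Snoop E) : Prop :=
  ∀ ti tf, occursOn H Ex ti tf →
    ∀ M : Interp ℕ Unit (TAtom E), Compatible H M →
      trSat M (tau Ex) (seg ti tf)

/-- Generalized segment: start at `a`, take `n` steps. -/
def genSeg (a n : ℕ) : Path ℕ Unit :=
  ⟨a, (List.range n).map (fun k => ((), a + k + 1))⟩

lemma seg_eq_genSeg (ti tf : ℕ) : seg ti tf = genSeg ti (tf + 1 - ti) := rfl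

lemma genSeg_last (a n : ℕ) : (genSeg a n).last = a + n := by
  cases n with
  | zero => simp [genSeg, Path.last]
  | succ m =>
      simp [genSeg, Path.last, List.range_succ]
      omega

lemma genSeg_split (a m n : ℕ) :
    Path.Split (genSeg a (m + n)) (genSeg a m) (genSeg (a + m) n) := by
  refine ⟨rfl, by rw [genSeg_last]; rfl, ?_⟩
  simp only [genSeg, List.range_add, List.map_append, List.map_map]
  congr 1
  apply List.map_congr_left
  intro k _
  simp
  omega

lemma pathF_sat {St L A : Type} [Inhabited A] (M : Interp St L A)
    (π : Path St L) : trSat M pathF π := by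
  by_cases h : trSat M (Fml.atom (default : A)) π
  · exact Or.inr (Or.inl h)
  · exact Or.inr (Or.inr (Or.inr h))

/-- `τ(Ex) ⊗ path` holds on `seg ti tf` when `Ex` occurs on `[ti, tf']`. -/
lemma seq_pathF_sat {E : Type} [Inhabited E] {H : History E} {Ex : Snoop E}
    (hEx : TransProp H Ex) {ti tf' tf : ℕ} (h1 : ti ≤ tf') (h2 : tf' ≤ tf)
    (hocc : occursOn H Ex ti tf')
    (M : Interp ℕ Unit (TAtom E)) (hM : Compatible H M) :
    trSat M (Fml.seq (tau Ex) pathF) (seg ti tf) := by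
  refine Or.inr ⟨seg ti tf', genSeg (tf' + 1) (tf - tf'), ?_, hEx _ _ hocc M hM,
    pathF_sat M _⟩
  have hs := genSeg_split ti (tf' + 1 - ti) (tf - tf')
  rw [seg_eq_genSeg, seg_eq_genSeg]
  have e1 : tf + 1 - ti = (tf' + 1 - ti) + (tf - tf') := by omega
  have e2 : ti + (tf' + 1 - ti) = tf' + 1 := by omega
  rw [e2] at hs
  rw [e1]
  exact hs

/-- `path ⊗ τ(Ex)` holds on `seg ti tf` when `Ex` occurs on `[ti', tf]`. -/
lemma pathF_seq_sat {E : Type} [Inhabited E] {H : History E} {Ex : Snoop E}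
    (hEx : TransProp H Ex) {ti ti' tf : ℕ} (h1 : ti ≤ ti') (h2 : ti' ≤ tf)
    (hocc : occursOn H Ex ti' tf)
    (M : Interp ℕ Unit (TAtom E)) (hM : Compatible H M) :
    trSat M (Fml.seq pathF (tau Ex)) (seg ti tf) := by
  refine Or.inr ⟨genSeg ti (ti' - ti), seg ti' tf, ?_, pathF_sat M _,
    hEx _ _ hocc M hM⟩
  have hs := genSeg_split ti (ti' - ti) (tf + 1 - ti')
  rw [seg_eq_genSeg, seg_eq_genSeg]
  have e1 : tf + 1 - ti = (ti' - ti) + (tf + 1 - ti') := by omega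
  have e2 : ti + (ti' - ti) = ti' := by omega
  rw [e2] at hs
  rw [e1]
  exact hs

/-- Conjunction/AND case of the SNOOP translation theorem: if
`E₁` and `E₂` satisfy the translation property and `[tᵢ,t_f] ∈ (E₁ △ E₂)[H]`
(i.e. there are `t_{f'} ≤ t_{i'}` within the interval such that either
(`[tᵢ,t_{f'}] ∈ E₁[H]` and `[t_{i'},t_f] ∈ E₂[H]`) or
(`[tᵢ,t_{f'}] ∈ E₂[H]` and `[t_{i'},t_f] ∈ E₁[H]`)), then every `M` compatible
with `H` satisfies
`[(τ(E₁) ⊗ path) ∧ (path ⊗ τ(E₂))] ∨ [(τ(E₂) ⊗ path) ∧ (path ⊗ τ(E₁))]` on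
`⟨s_{tᵢ}, …, s_{t_f+1}⟩`. -/
theorem snoop_and_case {E : Type} [Inhabited E] (H : History E)
    (E1 E2 : Snoop E) (h1 : TransProp H E1) (h2 : TransProp H E2)
    (ti tf : ℕ)
    (hocc : ∃ tf' ti', ti ≤ tf' ∧ tf' ≤ ti' ∧ ti' ≤ tf ∧
      ((occursOn H E1 ti tf' ∧ occursOn H E2 ti' tf) ∨
       (occursOn H E2 ti tf' ∧ occursOn H E1 ti' tf))) :
    ∀ M : Interp ℕ Unit (TAtom E), Compatible H M →
      trSat M
        (Fml.orF (Fml.andF (Fml.seq (tau E1) pathF) (Fml.seq pathF (tau E2)))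
                 (Fml.andF (Fml.seq (tau E2) pathF) (Fml.seq pathF (tau E1))))
        (seg ti tf) := by
  intro M hM
  obtain ⟨tf', ti', hitf', htf'ti', hti'f, hcase⟩ := hocc
  rcases hcase with ⟨o1, o2⟩ | ⟨o2, o1⟩
  · exact Or.inr (Or.inl (Or.inr
      ⟨seq_pathF_sat h1 hitf' (le_trans htf'ti' hti'f) o1 M hM,
       pathF_seq_sat h2 (le_trans hitf' htf'ti') hti'f o2 M hM⟩))
  · exact Or.inr (Or.inr (Or.inr
      ⟨seq_pathF_sat h2 hitf' (le_trans htf'ti' hti'f) o2 M hM,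
       pathF_seq_sat h1 (le_trans hitf' htf'ti') hti'f o1 M hM⟩))
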